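/- For a skew diagram A = λ/μ, the i-th part of the base partition B([λ/μ]) (the componentwise minimum over all ν with c(λ; μ, ν) ≠ 0) equals max over j ≥ 1 of max(0, λ_{i+j−1} − μ_j). Equivalently, B_i is the largest row length of the skew diagram obtained from A by removing the top i−1 boxes of every column. -/

import Mathlib

/-!
Lower bound: in an LR tableau of shape `l / m` and content `n`, every box of row `i + j` in a
column `c` with `m j ≤ c < l (i + j)` lies below at least `i` boxes of its column, so its entry
exceeds `i`. Reading this row from right to left, the ranks of these entries among equal entries
strictly increase, and by the lattice property they are at most the number `n i` of entries
`i + 1`.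

Upper bound: fill the top `i` boxes of every column with their depth and the rest,
`ρ^{i+1}(l / m)`, by right-justified columns (`minTableau`). This is an LR tableau, and its entries
`i + 1` sit at distinct distances from the right ends of their rows of `ρ^{i+1}(l / m)`.
-/

/-- `f : ℕ → ℕ` represents a partition (0-indexed parts): weakly decreasing
and eventually zero. -/
def IsPartition (f : ℕ → ℕ) : Prop :=
  (∀ ⦃i j : ℕ⦄, i ≤ j → f j ≤ f i) ∧ ∃ N, ∀ i, N ≤ i → f i = 0

/-- The box `(i, j)` (row `i`, column `j`, both 0-indexed) lies in the skew
diagram `l / m`. -/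
def InSkew (l m : ℕ → ℕ) (p : ℕ × ℕ) : Prop :=
  m p.1 ≤ p.2 ∧ p.2 < l p.1

/-- `T` is a Littlewood–Richardson tableau of skew shape `l / m` and content `n`:
entries are positive exactly on the shape, rows weakly increase, columns strictly
increase, the number of entries equal to `k + 1` is `n k`, and every prefix of the
reverse reading word (right to left, top to bottom) is a lattice word. -/
structure IsLR (l m n : ℕ → ℕ) (T : ℕ → ℕ → ℕ) : Prop where
  support : ∀ p : ℕ × ℕ, T p.1 p.2 ≠ 0 ↔ InSkew l m p
  row_weak : ∀ i j, InSkew l m (i, j) → InSkew l m (i, j + 1) → T i j ≤ T i (j + 1)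
  col_strict : ∀ i j, InSkew l m (i, j) → InSkew l m (i + 1, j) → T i j < T (i + 1) j
  content : ∀ k : ℕ, Nat.card {p : ℕ × ℕ // T p.1 p.2 = k + 1} = n k
  lattice : ∀ i j k : ℕ,
    Nat.card {p : ℕ × ℕ // T p.1 p.2 = k + 2 ∧ (p.1 < i ∨ (p.1 = i ∧ j ≤ p.2))} ≤
      Nat.card {p : ℕ × ℕ // T p.1 p.2 = k + 1 ∧ (p.1 < i ∨ (p.1 = i ∧ j ≤ p.2))}

/-- The Littlewood–Richardson coefficient `c(l; m, n)`: the number of LR tableaux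
of shape `l / m` and content `n`. -/
noncomputable def LR (l m n : ℕ → ℕ) : ℕ :=
  Nat.card {T : ℕ → ℕ → ℕ // IsLR l m n T}

/-- The partition `a` is contained in the skew diagram `l / m`: some translate
of `a`, or of `a` rotated by 180°, is a subset of the diagram. -/
def ContainedIn (a l m : ℕ → ℕ) : Prop :=
  (∃ r c, ∀ i j, j < a i → InSkew l m (r + i, c + j)) ∨
  (∃ r c, ∀ i j, j < a i → i ≤ r ∧ j ≤ c ∧ InSkew l m (r - i, c - j))

/-- The complement of `f` in the rectangle with `L` rows of length `k`,
rotated by 180°, regarded as a partition. -/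
def RotCompl (k L : ℕ) (f : ℕ → ℕ) : ℕ → ℕ :=
  fun i => if i < L then k - f (L - 1 - i) else 0

theorem IsPartition.finite_setOf_inSkew {l : ℕ → ℕ} (hl : IsPartition l) (m : ℕ → ℕ) :
    {p : ℕ × ℕ | InSkew l m p}.Finite := by
  obtain ⟨R, hR⟩ := hl.2
  refine ((Set.finite_Iio R).prod (Set.finite_Iio (l 0))).subset ?_
  rintro ⟨r, c⟩ ⟨-, hc⟩
  refine ⟨?_, hc.trans_le (hl.1 (Nat.zero_le r))⟩
  by_contra hr
  rw [hR r (not_lt.1 hr)] at hc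
  exact Nat.not_lt_zero c hc

theorem finite_setOf_eq_of_support {l m : ℕ → ℕ} {T : ℕ → ℕ → ℕ} (hl : IsPartition l)
    (hT : ∀ p : ℕ × ℕ, T p.1 p.2 ≠ 0 ↔ InSkew l m p) {v : ℕ} (hv : v ≠ 0) :
    {p : ℕ × ℕ | T p.1 p.2 = v}.Finite :=
  (hl.finite_setOf_inSkew m).subset fun p (hp : T p.1 p.2 = v) => (hT p).1 (hp ▸ hv)

noncomputable def prefixCount (T : ℕ → ℕ → ℕ) (v a b : ℕ) : ℕ :=
  Set.ncard {p : ℕ × ℕ | T p.1 p.2 = v ∧ (p.1 < a ∨ (p.1 = a ∧ b ≤ p.2))}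

theorem prefixCount_succ_le_of_injOn {l m : ℕ → ℕ} {T : ℕ → ℕ → ℕ} (hl : IsPartition l)
    (hT : ∀ p : ℕ × ℕ, T p.1 p.2 ≠ 0 ↔ InSkew l m p) {v : ℕ} (hv : v ≠ 0)
    (f : ℕ × ℕ → ℕ × ℕ)
    (hf : ∀ p : ℕ × ℕ, T p.1 p.2 = v + 1 → T (f p).1 (f p).2 = v ∧ (f p).1 < p.1)
    (hinj : Set.InjOn f {p | T p.1 p.2 = v + 1}) (a b : ℕ) :
    prefixCount T (v + 1) a b ≤ prefixCount T v a b := by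
  refine Set.ncard_le_ncard_of_injOn f ?_ (hinj.mono fun _ hp => hp.1)
    ((finite_setOf_eq_of_support hl hT hv).subset fun _ hp => hp.1)
  rintro p ⟨hp, hpre⟩
  obtain ⟨hfp, hlt⟩ := hf p hp
  exact ⟨hfp, Or.inl (by omega)⟩

namespace IsLR

variable {l m n : ℕ → ℕ} {T : ℕ → ℕ → ℕ}

theorem finite_setOf_eq (hl : IsPartition l) (hT : IsLR l m n T) {v : ℕ} (hv : v ≠ 0) :
    {p : ℕ × ℕ | T p.1 p.2 = v}.Finite :=
  finite_setOf_eq_of_support hl hT.support hv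

theorem ncard_setOf_eq (hT : IsLR l m n T) (k : ℕ) :
    Set.ncard {p : ℕ × ℕ | T p.1 p.2 = k + 1} = n k :=
  (Nat.card_coe_set_eq _).symm.trans (hT.content k)

theorem prefixCount_succ_le (hT : IsLR l m n T) (k a b : ℕ) :
    prefixCount T (k + 2) a b ≤ prefixCount T (k + 1) a b := by
  unfold prefixCount
  rw [← Nat.card_coe_set_eq, ← Nat.card_coe_set_eq]
  exact hT.lattice a b k

theorem prefixCount_le_prefixCount (hT : IsLR l m n T) {u v : ℕ} (hu : 1 ≤ u) (huv : u ≤ v)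
    (a b : ℕ) : prefixCount T v a b ≤ prefixCount T u a b := by
  induction v, huv using Nat.le_induction with
  | base => exact le_rfl
  | succ w hw ih =>
    obtain ⟨k, rfl⟩ : ∃ k, w = k + 1 := ⟨w - 1, by omega⟩
    exact (hT.prefixCount_succ_le k a b).trans ih

theorem prefixCount_le_content (hl : IsPartition l) (hT : IsLR l m n T) (k a b : ℕ) :
    prefixCount T (k + 1) a b ≤ n k :=
  hT.ncard_setOf_eq k ▸ Set.ncard_le_ncard (fun _ hp => hp.1) (hT.finite_setOf_eq hl k.succ_ne_zero)

theorem one_le_prefixCount_self (hl : IsPartition l) (hT : IsLR l m n T) {r c : ℕ}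
    (h : T r c ≠ 0) : 1 ≤ prefixCount T (T r c) r c :=
  (Set.ncard_pos ((hT.finite_setOf_eq hl h).subset fun _ hp => hp.1)).2
    ⟨(r, c), rfl, Or.inr ⟨rfl, le_rfl⟩⟩

theorem prefixCount_lt_of_lt (hl : IsPartition l) (hT : IsLR l m n T) {r c c' : ℕ}
    (h : T r c ≠ 0) (hcc' : c < c') : prefixCount T (T r c) r c' < prefixCount T (T r c) r c := by
  refine Set.ncard_lt_ncard ⟨?_, fun hsub => ?_⟩ ((hT.finite_setOf_eq hl h).subset fun _ hp => hp.1)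
  · rintro p ⟨hp, hpre⟩
    exact ⟨hp, by omega⟩
  · obtain ⟨-, hpre⟩ := hsub (show (r, c) ∈ _ from ⟨rfl, Or.inr ⟨rfl, le_rfl⟩⟩)
    omega

theorem le_of_le_in_row (hT : IsLR l m n T) {r c c' : ℕ} (hc : InSkew l m (r, c))
    (hc' : InSkew l m (r, c')) (hcc' : c ≤ c') : T r c ≤ T r c' := by
  induction c', hcc' using Nat.le_induction with
  | base => exact le_rfl
  | succ d hd ih =>
    have hd' : InSkew l m (r, d) := ⟨hc.1.trans hd, Nat.lt_of_succ_lt hc'.2⟩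
    exact (ih hd').trans (hT.row_weak r d hd' hc')

theorem lt_of_boxes_above (hl : IsPartition l) (hm : IsPartition m) (hT : IsLR l m n T)
    {j c s : ℕ} (hc : m j ≤ c) (hcs : c < l (j + s)) : s < T (j + s) c := by
  have hin : ∀ t ≤ s, InSkew l m (j + t, c) := fun t ht =>
    ⟨(hm.1 (Nat.le_add_right j t)).trans hc, hcs.trans_le (hl.1 (by omega))⟩
  induction s with
  | zero => exact Nat.pos_of_ne_zero ((hT.support _).2 (hin 0 le_rfl))
  | succ s ih =>
    have : T (j + s) c < T (j + (s + 1)) c :=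
      hT.col_strict (j + s) c (hin s s.le_succ) (hin (s + 1) le_rfl)
    have := ih (hcs.trans_le (hl.1 (by omega))) fun t ht => hin t (by omega)
    omega

theorem card_Ico_le_content (hl : IsPartition l) (hT : IsLR l m n T) {r a b k : ℕ}
    (hrow : ∀ c ∈ Finset.Ico a b, InSkew l m (r, c) ∧ k + 1 ≤ T r c) : b - a ≤ n k := by
  set rank : ℕ → ℕ := fun c => prefixCount T (T r c) r c
  have hanti : StrictAntiOn rank (Finset.Ico a b : Set ℕ) := by
    intro c hc c' hc' hcc'
    have hTc : T r c ≠ 0 := by have := (hrow c hc).2; omega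
    calc rank c' ≤ prefixCount T (T r c) r c' :=
          hT.prefixCount_le_prefixCount (Nat.one_le_iff_ne_zero.2 hTc)
            (hT.le_of_le_in_row (hrow c hc).1 (hrow c' hc').1 hcc'.le) _ _
      _ < rank c := hT.prefixCount_lt_of_lt hl hTc hcc'
  have hmaps : Set.MapsTo rank (Finset.Ico a b : Set ℕ) (Finset.Icc 1 (n k) : Set ℕ) := by
    intro c hc
    have hTc := (hrow c hc).2
    refine Finset.mem_Icc.2 ⟨hT.one_le_prefixCount_self hl (by omega), ?_⟩
    exact (hT.prefixCount_le_prefixCount k.succ_pos hTc _ _).trans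
      (hT.prefixCount_le_content hl k _ _)
  simpa using Finset.card_le_card_of_injOn rank hmaps hanti.injOn

theorem sub_le_content (hl : IsPartition l) (hm : IsPartition m) (hT : IsLR l m n T) (i j : ℕ) :
    l (i + j) - m j ≤ n i := by
  refine hT.card_Ico_le_content (r := j + i) hl fun c hc => ?_
  obtain ⟨hc₁, hc₂⟩ := Finset.mem_Ico.1 hc
  rw [add_comm] at hc₂
  exact ⟨⟨(hm.1 (Nat.le_add_right j i)).trans hc₁, hc₂⟩, hT.lt_of_boxes_above hl hm hc₁ hc₂⟩

theorem isPartition_content (hl : IsPartition l) (hT : IsLR l m n T) : IsPartition n := by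
  obtain ⟨R, hR⟩ := hl.2
  have hrow : ∀ p : ℕ × ℕ, T p.1 p.2 ≠ 0 → p.1 < R := fun p hp => by
    by_contra h
    have := ((hT.support p).1 hp).2
    rw [hR p.1 (not_lt.1 h)] at this
    exact Nat.not_lt_zero _ this
  have hall : ∀ k, n k = prefixCount T (k + 1) R 0 := fun k => by
    rw [← hT.ncard_setOf_eq k, prefixCount]
    congr 1
    ext p
    exact ⟨fun (hp : T p.1 p.2 = k + 1) => ⟨hp, Or.inl (hrow p (by omega))⟩, And.left⟩
  refine ⟨antitone_nat_of_succ_le fun k => ?_, ?_⟩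
  · rw [hall, hall]
    exact hT.prefixCount_succ_le k R 0
  · obtain ⟨V, hV⟩ := ((hl.finite_setOf_inSkew m).image fun p => T p.1 p.2).bddAbove
    refine ⟨V, fun k hk => ?_⟩
    rw [← hT.ncard_setOf_eq k, Set.ncard_eq_zero (hT.finite_setOf_eq hl k.succ_ne_zero),
      Set.eq_empty_iff_forall_notMem]
    intro p (hp : T p.1 p.2 = k + 1)
    have := hV ⟨p, (hT.support p).1 (by omega), hp⟩
    omega

theorem le_of_content_eq_zero (hl : IsPartition l) (hT : IsLR l m n T) {V : ℕ}
    (hV : ∀ k, V ≤ k → n k = 0) (r c : ℕ) : T r c ≤ V := by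
  by_contra h
  have hpos := (Set.ncard_pos (hT.finite_setOf_eq hl (Nat.succ_ne_zero (T r c - 1)))).2
    ⟨(r, c), show T r c = T r c - 1 + 1 by omega⟩
  rw [hT.ncard_setOf_eq, hV _ (by omega)] at hpos
  exact hpos.false

end IsLR

theorem finite_isLR {l m n : ℕ → ℕ} (hl : IsPartition l) (hn : IsPartition n) :
    Finite {T : ℕ → ℕ → ℕ // IsLR l m n T} := by
  obtain ⟨V, hV⟩ := hn.2
  have := (hl.finite_setOf_inSkew m).to_subtype
  refine Finite.of_injective (β := {p : ℕ × ℕ | InSkew l m p} → Fin (V + 1))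
    (fun T p => ⟨T.1 p.1.1 p.1.2, Nat.lt_succ_of_le (T.2.le_of_content_eq_zero hl hV _ _)⟩) ?_
  rintro ⟨T₁, hT₁⟩ ⟨T₂, hT₂⟩ h
  ext r c
  by_cases hrc : InSkew l m (r, c)
  · exact congrArg Fin.val (congrFun h ⟨(r, c), hrc⟩)
  · exact (not_not.1 (mt (hT₁.support (r, c)).1 hrc)).trans
      (not_not.1 (mt (hT₂.support (r, c)).1 hrc)).symm

theorem IsLR.LR_ne_zero {l m n : ℕ → ℕ} {T : ℕ → ℕ → ℕ} (hl : IsPartition l)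
    (hT : IsLR l m n T) : LR l m n ≠ 0 :=
  Nat.card_ne_zero.2 ⟨⟨⟨T, hT⟩⟩, finite_isLR hl (hT.isPartition_content hl)⟩

/-- The length of the row of `ρ^{i+1}(l / m)` that lies in row `j` of `l / m`. -/
def tailRow (l m : ℕ → ℕ) (i j : ℕ) : ℕ := if j < i then 0 else l j - m (j - i)

def longRowsBefore (l m : ℕ → ℕ) (i r X : ℕ) : ℕ :=
  ((Finset.range r).filter fun j => X ≤ tailRow l m i j).card

def colDepth (m : ℕ → ℕ) (r c : ℕ) : ℕ :=
  ((Finset.range (r + 1)).filter fun s => m s ≤ c).card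

/-- The top `i` boxes of every column are filled with their depth `1, …, i`. Below them lies
`ρ^{i+1}(l / m)`; there the box at distance `X` from the right end of its row gets `i + 1` plus the
number of earlier rows of `ρ^{i+1}(l / m)` of length at least `X`. -/
def minTableau (l m : ℕ → ℕ) (i r c : ℕ) : ℕ :=
  if m r ≤ c ∧ c < l r then
    if i ≤ r ∧ m (r - i) ≤ c then i + 1 + longRowsBefore l m i r (l r - c) else colDepth m r c
  else 0

noncomputable def minContent (l m : ℕ → ℕ) (i k : ℕ) : ℕ :=
  Nat.card {p : ℕ × ℕ // minTableau l m i p.1 p.2 = k + 1}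

section MinTableau

variable {l m : ℕ → ℕ} {i r c : ℕ}

theorem colDepth_pos (h : m r ≤ c) : 0 < colDepth m r c :=
  Finset.card_pos.2 ⟨r, Finset.mem_filter.2 ⟨Finset.self_mem_range_succ r, h⟩⟩

theorem colDepth_mono {c' : ℕ} (h : c ≤ c') : colDepth m r c ≤ colDepth m r c' :=
  Finset.card_le_card fun _ hs =>
    Finset.mem_filter.2 ⟨(Finset.mem_filter.1 hs).1, (Finset.mem_filter.1 hs).2.trans h⟩

theorem colDepth_succ (h : m (r + 1) ≤ c) : colDepth m (r + 1) c = colDepth m r c + 1 := by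
  rw [colDepth, Finset.range_add_one, Finset.filter_insert, if_pos h,
    Finset.card_insert_of_notMem (by simp), colDepth]

theorem colDepth_le (hm : IsPartition m) (h : ¬(i ≤ r ∧ m (r - i) ≤ c)) : colDepth m r c ≤ i := by
  rcases lt_or_ge r i with hr | hr
  · exact (Finset.card_filter_le _ _).trans (by simpa using hr)
  · calc colDepth m r c ≤ (Finset.Ioc (r - i) r).card := Finset.card_le_card fun s hs => by
          obtain ⟨hs₁, hs₂⟩ := Finset.mem_filter.1 hs
          rw [Finset.mem_range] at hs₁
          exact Finset.mem_Ioc.2 ⟨not_le.1 fun hsi => h ⟨hr, (hm.1 hsi).trans hs₂⟩, by omega⟩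
      _ = i := by simp; omega

theorem lt_colDepth (hm : IsPartition m) (h₁ : i ≤ r) (h₂ : m (r - i) ≤ c) :
    i < colDepth m r c := by
  calc i < (Finset.Icc (r - i) r).card := by simp; omega
    _ ≤ colDepth m r c := Finset.card_le_card fun s hs => by
        obtain ⟨hs₁, hs₂⟩ := Finset.mem_Icc.1 hs
        exact Finset.mem_filter.2 ⟨Finset.mem_range.2 (by omega), (hm.1 hs₁).trans h₂⟩

theorem exists_eq_succ_of_two_le_colDepth (hm : IsPartition m) (h : 2 ≤ colDepth m r c) :
    ∃ r', r = r' + 1 ∧ m r' ≤ c := by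
  by_contra hne
  have hsub : (Finset.range (r + 1)).filter (fun s => m s ≤ c) ⊆ {r} := fun s hs => by
    obtain ⟨hs₁, hs₂⟩ := Finset.mem_filter.1 hs
    rw [Finset.mem_range] at hs₁
    rw [Finset.mem_singleton]
    by_contra hsr
    exact hne ⟨r - 1, by omega, (hm.1 (show s ≤ r - 1 by omega)).trans hs₂⟩
  have := Finset.card_le_card hsub
  rw [Finset.card_singleton] at this
  exact absurd h (by unfold colDepth; omega)

theorem tailRow_le (j : ℕ) : tailRow l m i j ≤ l j := by
  unfold tailRow; split <;> omega

theorem longRowsBefore_succ (r X : ℕ) : longRowsBefore l m i (r + 1) X =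
    longRowsBefore l m i r X + if X ≤ tailRow l m i r then 1 else 0 := by
  unfold longRowsBefore
  rw [Finset.range_add_one, Finset.filter_insert]
  split
  · rw [Finset.card_insert_of_notMem (by simp)]
  · rfl

theorem longRowsBefore_anti {X Y : ℕ} (h : X ≤ Y) (r : ℕ) :
    longRowsBefore l m i r Y ≤ longRowsBefore l m i r X :=
  Finset.card_le_card fun _ hj =>
    Finset.mem_filter.2 ⟨(Finset.mem_filter.1 hj).1, h.trans (Finset.mem_filter.1 hj).2⟩

theorem longRowsBefore_lt {r r' X : ℕ} (hr : r < r') (hX : X ≤ tailRow l m i r) :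
    longRowsBefore l m i r X < longRowsBefore l m i r' X := by
  have hsucc := longRowsBefore_succ (l := l) (m := m) (i := i) r X
  rw [if_pos hX] at hsucc
  have : longRowsBefore l m i (r + 1) X ≤ longRowsBefore l m i r' X :=
    Finset.card_le_card (Finset.filter_subset_filter _ (Finset.range_subset_range.2 hr))
  omega

theorem exists_of_longRowsBefore_eq_succ {r X u : ℕ} (h : longRowsBefore l m i r X = u + 1) :
    ∃ j < r, X ≤ tailRow l m i j ∧ longRowsBefore l m i j X = u := by
  induction r with
  | zero => simp [longRowsBefore] at h
  | succ r ih =>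
    rw [longRowsBefore_succ] at h
    by_cases hX : X ≤ tailRow l m i r
    · by_cases hu : longRowsBefore l m i r X = u
      · exact ⟨r, r.lt_succ_self, hX, hu⟩
      · rw [if_pos hX] at h
        exact absurd h (by omega)
    · rw [if_neg hX, add_zero] at h
      obtain ⟨j, hj, hjX, hju⟩ := ih h
      exact ⟨j, hj.trans r.lt_succ_self, hjX, hju⟩

theorem minTableau_of_deep (hin : InSkew l m (r, c)) (h : i ≤ r ∧ m (r - i) ≤ c) :
    minTableau l m i r c = i + 1 + longRowsBefore l m i r (l r - c) := by
  rw [minTableau, if_pos (show m r ≤ c ∧ c < l r from hin), if_pos h]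

theorem minTableau_of_shallow (hin : InSkew l m (r, c)) (h : ¬(i ≤ r ∧ m (r - i) ≤ c)) :
    minTableau l m i r c = colDepth m r c := by
  rw [minTableau, if_pos (show m r ≤ c ∧ c < l r from hin), if_neg h]

theorem minTableau_ne_zero_iff (p : ℕ × ℕ) : minTableau l m i p.1 p.2 ≠ 0 ↔ InSkew l m p := by
  obtain ⟨r, c⟩ := p
  by_cases hin : InSkew l m (r, c)
  · refine iff_of_true ?_ hin
    by_cases h : i ≤ r ∧ m (r - i) ≤ c
    · rw [minTableau_of_deep hin h]; omega
    · rw [minTableau_of_shallow hin h]; exact (colDepth_pos hin.1).ne'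
  · refine iff_of_false (fun h => h ?_) hin
    rw [minTableau, if_neg (show ¬(m r ≤ c ∧ c < l r) from hin)]

theorem minTableau_le_succ_col (hm : IsPartition m) (h₁ : InSkew l m (r, c))
    (h₂ : InSkew l m (r, c + 1)) : minTableau l m i r c ≤ minTableau l m i r (c + 1) := by
  by_cases hA : i ≤ r ∧ m (r - i) ≤ c
  · rw [minTableau_of_deep h₁ hA, minTableau_of_deep h₂ ⟨hA.1, by omega⟩]
    have := longRowsBefore_anti (l := l) (m := m) (i := i) (show l r - (c + 1) ≤ l r - c by omega) r
    omega
  · rw [minTableau_of_shallow h₁ hA]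
    by_cases hB : i ≤ r ∧ m (r - i) ≤ c + 1
    · rw [minTableau_of_deep h₂ hB]
      have := colDepth_le hm hA
      omega
    · rw [minTableau_of_shallow h₂ hB]
      exact colDepth_mono c.le_succ

theorem minTableau_lt_succ_row (hl : IsPartition l) (hm : IsPartition m) (h₁ : InSkew l m (r, c))
    (h₂ : InSkew l m (r + 1, c)) : minTableau l m i r c < minTableau l m i (r + 1) c := by
  by_cases hA : i ≤ r ∧ m (r - i) ≤ c
  · have hB : i ≤ r + 1 ∧ m (r + 1 - i) ≤ c := ⟨by omega, (hm.1 (by omega)).trans hA.2⟩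
    rw [minTableau_of_deep h₁ hA, minTableau_of_deep h₂ hB]
    have hl' := hl.1 (show r ≤ r + 1 by omega)
    have hsucc := longRowsBefore_succ (l := l) (m := m) (i := i) r (l (r + 1) - c)
    rw [if_pos (by unfold tailRow; rw [if_neg (not_lt.2 hA.1)]; omega)] at hsucc
    have := longRowsBefore_anti (l := l) (m := m) (i := i)
      (show l (r + 1) - c ≤ l r - c by omega) r
    omega
  · rw [minTableau_of_shallow h₁ hA]
    by_cases hB : i ≤ r + 1 ∧ m (r + 1 - i) ≤ c
    · rw [minTableau_of_deep h₂ hB]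
      have := colDepth_le hm hA
      omega
    · rw [minTableau_of_shallow h₂ hB, colDepth_succ (show m (r + 1) ≤ c from h₂.1)]
      omega

theorem minTableau_eq_add_iff (hm : IsPartition m) {u : ℕ} :
    minTableau l m i r c = i + 1 + u ↔
      c < l r ∧ l r - c ≤ tailRow l m i r ∧ longRowsBefore l m i r (l r - c) = u := by
  constructor
  · intro h
    by_cases hin : m r ≤ c ∧ c < l r
    · by_cases hd : i ≤ r ∧ m (r - i) ≤ c
      · rw [minTableau_of_deep hin hd] at h
        unfold tailRow
        rw [if_neg (not_lt.2 hd.1)]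
        omega
      · rw [minTableau_of_shallow hin hd] at h
        have := colDepth_le hm hd
        omega
    · rw [minTableau, if_neg hin] at h
      omega
  · rintro ⟨hc, hX, hN⟩
    have hri : i ≤ r := by
      by_contra hri
      unfold tailRow at hX
      rw [if_pos (not_le.1 hri)] at hX
      omega
    unfold tailRow at hX
    rw [if_neg (not_lt.2 hri)] at hX
    have hmc : m (r - i) ≤ c := by omega
    rw [minTableau_of_deep ⟨(hm.1 (Nat.sub_le r i)).trans hmc, hc⟩ ⟨hri, hmc⟩, hN]

theorem eq_of_minTableau_eq_add (hm : IsPartition m) {r' c' u : ℕ}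
    (h : minTableau l m i r c = i + 1 + u) (h' : minTableau l m i r' c' = i + 1 + u)
    (hX : l r - c = l r' - c') : r = r' ∧ c = c' := by
  obtain ⟨hc, hXr, hN⟩ := (minTableau_eq_add_iff hm).1 h
  obtain ⟨hc', hXr', hN'⟩ := (minTableau_eq_add_iff hm).1 h'
  rw [hX] at hXr hN
  have hrr' : r = r' := by
    rcases lt_trichotomy r r' with hlt | heq | hgt
    · have := longRowsBefore_lt hlt hXr
      omega
    · exact heq
    · have := longRowsBefore_lt hgt hXr'
      omega
  subst hrr'
  exact ⟨rfl, by omega⟩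

theorem minTableau_above (hl : IsPartition l) (hm : IsPartition m) {v : ℕ} (hv : 2 ≤ v)
    (hvi : v ≤ i + 1) (h : minTableau l m i r c = v) :
    ∃ r', r = r' + 1 ∧ minTableau l m i r' c = v - 1 := by
  have hin : InSkew l m (r, c) := (minTableau_ne_zero_iff (r, c)).1
    (show minTableau l m i r c ≠ 0 by omega)
  by_cases hd : i ≤ r ∧ m (r - i) ≤ c
  · rw [minTableau_of_deep hin hd] at h
    obtain ⟨r', rfl⟩ : ∃ r', r = r' + 1 := ⟨r - 1, by omega⟩
    have hin' : InSkew l m (r', c) :=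
      ⟨(hm.1 (by omega)).trans hd.2, hin.2.trans_le (hl.1 r'.le_succ)⟩
    have hd' : ¬(i ≤ r' ∧ m (r' - i) ≤ c) := fun hd' => by
      have := minTableau_lt_succ_row (i := i) hl hm hin' hin
      rw [minTableau_of_deep hin' hd', minTableau_of_deep hin hd] at this
      omega
    have hlt := lt_colDepth hm hd.1 hd.2
    have hle := colDepth_le hm hd'
    rw [colDepth_succ (show m (r' + 1) ≤ c from hin.1)] at hlt
    exact ⟨r', rfl, by rw [minTableau_of_shallow hin' hd']; omega⟩
  · rw [minTableau_of_shallow hin hd] at h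
    obtain ⟨r', rfl, hmr'⟩ := exists_eq_succ_of_two_le_colDepth hm (h ▸ hv)
    have hin' : InSkew l m (r', c) := ⟨hmr', hin.2.trans_le (hl.1 r'.le_succ)⟩
    have hd' : ¬(i ≤ r' ∧ m (r' - i) ≤ c) := fun hd' =>
      hd ⟨by omega, (hm.1 (by omega)).trans hd'.2⟩
    rw [colDepth_succ (show m (r' + 1) ≤ c from hin.1)] at h
    exact ⟨r', rfl, by rw [minTableau_of_shallow hin' hd']; omega⟩

/-- Each entry `v + 1` has a partner `v` in an earlier row, with distinct entries getting
distinct partners: for `v ≤ i` the box just above, for `v ≥ i + 1` the box at the same distance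
from the right end in the previous row of `ρ^{i+1}(l / m)` that is long enough. -/
theorem minTableau_prefixCount_succ_le (hl : IsPartition l) (hm : IsPartition m) (k a b : ℕ) :
    prefixCount (minTableau l m i) (k + 2) a b ≤ prefixCount (minTableau l m i) (k + 1) a b := by
  rcases le_or_gt (k + 2) (i + 1) with hlow | hhigh
  · refine prefixCount_succ_le_of_injOn hl minTableau_ne_zero_iff k.succ_ne_zero
      (fun p => (p.1 - 1, p.2)) (fun p hp => ?_) (fun p hp q hq hpq => ?_) a b
    · obtain ⟨r', hr', hT⟩ := minTableau_above hl hm (by omega) hlow hp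
      refine ⟨?_, by omega⟩
      show minTableau l m i (p.1 - 1) p.2 = k + 1
      rwa [hr', Nat.add_sub_cancel]
    · obtain ⟨r, hr, -⟩ := minTableau_above hl hm (by omega) hlow hp
      obtain ⟨r', hr', -⟩ := minTableau_above hl hm (by omega) hlow hq
      have h₁ := congrArg Prod.fst hpq
      have h₂ := congrArg Prod.snd hpq
      dsimp only at h₁ h₂
      exact Prod.ext (by omega) h₂
  · obtain ⟨u, rfl⟩ : ∃ u, k = i + u := ⟨k - i, by omega⟩
    rw [show i + u + 2 = i + 1 + u + 1 by ring, show i + u + 1 = i + 1 + u by ring]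
    have hpartner : ∀ p : ℕ × ℕ, minTableau l m i p.1 p.2 = i + 1 + u + 1 →
        ∃ j < p.1, l p.1 - p.2 ≤ tailRow l m i j ∧ longRowsBefore l m i j (l p.1 - p.2) = u :=
      fun p hp =>
        exists_of_longRowsBefore_eq_succ ((minTableau_eq_add_iff hm (u := u + 1)).1 hp).2.2
    choose! g hg using hpartner
    refine prefixCount_succ_le_of_injOn hl minTableau_ne_zero_iff (by omega)
      (fun p => (g p, l (g p) - (l p.1 - p.2))) (fun p hp => ?_) (fun p hp q hq hpq => ?_) a b
    · obtain ⟨hj, hX, hN⟩ := hg p hp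
      have hc := ((minTableau_eq_add_iff hm (u := u + 1)).1 hp).1
      have := tailRow_le (l := l) (m := m) (i := i) (g p)
      show minTableau l m i (g p) (l (g p) - (l p.1 - p.2)) = i + 1 + u ∧ g p < p.1
      refine ⟨(minTableau_eq_add_iff hm).2 ⟨by omega, ?_, ?_⟩, hj⟩
      · rwa [Nat.sub_sub_self (by omega)]
      · rwa [Nat.sub_sub_self (by omega)]
    · have hj : g p = g q := congrArg Prod.fst hpq
      have hX : l (g p) - (l p.1 - p.2) = l (g q) - (l q.1 - q.2) := congrArg Prod.snd hpq
      have hXp := (hg p hp).2.1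
      have hXq := (hg q hq).2.1
      have := tailRow_le (l := l) (m := m) (i := i) (g p)
      rw [← hj] at hX hXq
      obtain ⟨h₁, h₂⟩ := eq_of_minTableau_eq_add hm (u := u + 1) hp hq (by omega)
      exact Prod.ext h₁ h₂

theorem isLR_minTableau (hl : IsPartition l) (hm : IsPartition m) (i : ℕ) :
    IsLR l m (minContent l m i) (minTableau l m i) where
  support := minTableau_ne_zero_iff
  row_weak _ _ := minTableau_le_succ_col hm
  col_strict _ _ := minTableau_lt_succ_row hl hm
  content _ := rfl
  lattice a b k := by
    have := minTableau_prefixCount_succ_le (i := i) hl hm k a b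
    unfold prefixCount at this
    rwa [← Nat.card_coe_set_eq, ← Nat.card_coe_set_eq] at this

theorem minContent_self_le (hm : IsPartition m) {S : ℕ} (hS : ∀ j, l (i + j) - m j ≤ S) :
    minContent l m i i ≤ S := by
  have htail : ∀ r, tailRow l m i r ≤ S := fun r => by
    unfold tailRow
    split
    · exact Nat.zero_le S
    · simpa [Nat.add_sub_cancel' (not_lt.1 ‹_›)] using hS (r - i)
  show Nat.card {p : ℕ × ℕ | minTableau l m i p.1 p.2 = i + 1 + 0} ≤ S
  rw [Nat.card_coe_set_eq]
  calc _ ≤ (Finset.Icc 1 S : Set ℕ).ncard := by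
        refine Set.ncard_le_ncard_of_injOn (fun p => l p.1 - p.2) (fun p hp => ?_)
          (fun p hp q hq hpq => Prod.ext_iff.2 (eq_of_minTableau_eq_add hm hp hq hpq))
          (Finset.finite_toSet _)
        obtain ⟨hc, hX, -⟩ := (minTableau_eq_add_iff hm).1 hp
        exact Finset.mem_Icc.2 ⟨by omega, hX.trans (htail p.1)⟩
    _ = S := by simp

end MinTableau

theorem stmt5_general (l m : ℕ → ℕ) (hl : IsPartition l) (hm : IsPartition m) :
    ∀ i : ℕ,
      sInf {x | ∃ n, IsPartition n ∧ LR l m n ≠ 0 ∧ n i = x} =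
        sSup {x | ∃ j : ℕ, x = l (i + j) - m j} := by
  intro i
  have hbdd : BddAbove {x | ∃ j : ℕ, x = l (i + j) - m j} :=
    ⟨l 0, by rintro _ ⟨j, rfl⟩; exact (Nat.sub_le _ _).trans (hl.1 (Nat.zero_le _))⟩
  have hT := isLR_minTableau hl hm i
  have hmem : minContent l m i i ∈ {x | ∃ n, IsPartition n ∧ LR l m n ≠ 0 ∧ n i = x} :=
    ⟨_, hT.isPartition_content hl, hT.LR_ne_zero hl, rfl⟩
  refine le_antisymm ((csInf_le (OrderBot.bddBelow _) hmem).trans ?_) (le_csInf ⟨_, hmem⟩ ?_)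
  · exact minContent_self_le hm fun j => le_csSup hbdd ⟨j, rfl⟩
  · rintro _ ⟨n, -, hn, rfl⟩
    obtain ⟨⟨T, hT⟩⟩ := (Nat.card_ne_zero.1 hn).1
    exact csSup_le ⟨_, 0, rfl⟩ fun _ ⟨j, hj⟩ => hj ▸ hT.sub_le_content hl hm i j

/-- The `i`-th part (0-indexed) of the base partition of `[l / m]` equals
`max_j max(0, l_{i+j} - m_j)` (0-indexed `j`), i.e. the largest row of the
diagram obtained from `l / m` by removing the top `i` boxes of every column. -/
theorem stmt5 (l m : ℕ → ℕ) (hl : IsPartition l) (hm : IsPartition m)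
    (hml : ∀ i, m i ≤ l i) :
    ∀ i : ℕ,
      sInf {x | ∃ n, IsPartition n ∧ LR l m n ≠ 0 ∧ n i = x} =
        sSup {x | ∃ j : ℕ, x = l (i + j) - m j} :=
  stmt5_general l m hl hm
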